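/- For the chained Bell game with N ≥ 2 settings, no deterministic local strategy satisfies all 2N constraints: if bits α_0,…,α_{N−1}, β_0,…,β_{N−1} satisfy α_j ⊕ β_j = 0 for all j and α_{j+1} ⊕ β_j = 0 for j = 0,…,N−2, then α_0 ⊕ β_{N−1} = 0, contradicting the required α_0 ⊕ β_{N−1} = 1. Hence at most 2N−1 of the 2N constraints hold, and this bound is achieved (e.g. by the all-zeros strategy), so the classical value is ω_L = 1 − 1/(2N). -/

import Mathlib

/-!
Going around the chain, the constraints `αⱼ = βⱼ` and `αⱼ₊₁ = βⱼ` (for `j < N − 1`) force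
all of `α` and `β` to be one constant bit, so `α₀ ⊕ β_{N−1} = 0` and the wrap-around constraint
`α₀ ⊕ β_{N−1} = 1` fails. Hence at most `2N − 1` constraints hold, and the all-zeros strategy
violates only the wrap-around one.
-/

/-- The chained-game predicate on input pairs (`N = n+2` settings):
`f(j,j) = 0`, `f(j+1,j) = 0` for `j < N−1`, and `f(0,N−1) = 1`.  The allowed
pairs are exactly `(j,j)` and `(j+1 mod N, j)`, and on those pairs `u = 0 ∧
v = N−1` singles out the wrap-around edge. -/
def chainedF (n : ℕ) (u v : Fin (n + 2)) : Bool :=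
  if u = 0 ∧ v = Fin.last (n + 1) then true else false

/-- Number of the `2N` chained constraints satisfied by the deterministic
local strategy `(α, β)`. -/
def chainedSat (n : ℕ) (α β : Fin (n + 2) → Bool) : ℕ :=
  (Finset.univ.filter fun j : Fin (n + 2) =>
    xor (α j) (β j) = chainedF n j j).card +
  (Finset.univ.filter fun j : Fin (n + 2) =>
    xor (α (j + 1)) (β j) = chainedF n (j + 1) j).card

open Finset

lemma card_filter_add_card_filter_lt {ι : Type*} [Fintype ι] (p q : ι → Prop)
    [DecidablePred p] [DecidablePred q] (h : ¬((∀ i, p i) ∧ ∀ i, q i)) :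
    #(univ.filter p) + #(univ.filter q) < 2 * Fintype.card ι := by
  have hp := card_filter_le univ p
  have hq := card_filter_le univ q
  have hpq : #(univ.filter p) ≠ #(univ : Finset ι) ∨ #(univ.filter q) ≠ #(univ : Finset ι) := by
    simpa only [Ne, card_filter_eq_iff, mem_univ, forall_const, not_and_or] using h
  rw [card_univ] at hp hq hpq
  omega

section

variable {n : ℕ}

lemma chainedF_self (j : Fin (n + 2)) : chainedF n j j = false := by
  rw [chainedF, if_neg]
  rintro ⟨rfl, h⟩
  exact Fin.last_pos.ne h

lemma chainedF_add_one_eq_true_iff (j : Fin (n + 2)) :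
    chainedF n (j + 1) j = true ↔ j = Fin.last (n + 1) := by
  unfold chainedF
  by_cases hj : j = Fin.last (n + 1)
  · simp [hj, Fin.last_add_one]
  · simp [hj]

lemma eq_of_chain (α β : Fin (n + 2) → Bool) (hdiag : ∀ j, α j = β j)
    (hstep : ∀ j : Fin (n + 2), j ≠ Fin.last (n + 1) → α (j + 1) = β j) (j : Fin (n + 2)) :
    α j = α 0 := by
  induction j using Fin.induction with
  | zero => rfl
  | succ i ih =>
    rw [← ih, ← Fin.coeSucc_eq_succ, hstep _ (Fin.castSucc_ne_last i), hdiag]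

lemma xor_zero_last_eq_false (α β : Fin (n + 2) → Bool) (hdiag : ∀ j, α j = β j)
    (hstep : ∀ j : Fin (n + 2), j ≠ Fin.last (n + 1) → α (j + 1) = β j) :
    xor (α 0) (β (Fin.last (n + 1))) = false := by
  rw [← hdiag, eq_of_chain α β hdiag hstep (Fin.last _), Bool.xor_self]

lemma not_forall_constraints (α β : Fin (n + 2) → Bool) :
    ¬((∀ j, xor (α j) (β j) = chainedF n j j) ∧
      ∀ j, xor (α (j + 1)) (β j) = chainedF n (j + 1) j) := by
  rintro ⟨hdiag, hstep⟩
  have hdiag' : ∀ j, α j = β j := fun j => by simpa [chainedF_self] using hdiag j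
  have hstep' : ∀ j : Fin (n + 2), j ≠ Fin.last (n + 1) → α (j + 1) = β j := fun j hj => by
    simpa [(chainedF_add_one_eq_true_iff j).not.2 hj] using hstep j
  have hwrap := hstep (Fin.last (n + 1))
  rw [(chainedF_add_one_eq_true_iff _).2 rfl, Fin.last_add_one,
    xor_zero_last_eq_false α β hdiag' hstep'] at hwrap
  exact Bool.false_ne_true hwrap

lemma chainedSat_lt (α β : Fin (n + 2) → Bool) : chainedSat n α β < 2 * (n + 2) := by
  rw [chainedSat]
  simpa using card_filter_add_card_filter_lt _ _ (not_forall_constraints α β)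

lemma chainedSat_false_add_one :
    chainedSat n (fun _ => false) (fun _ => false) + 1 = 2 * (n + 2) := by
  have hstep : (univ.filter fun j : Fin (n + 2) =>
      xor false false = chainedF n (j + 1) j) = univ.erase (Fin.last (n + 1)) := by
    rw [← filter_ne']
    refine filter_congr fun j _ => ?_
    rw [Ne, ← chainedF_add_one_eq_true_iff]
    cases chainedF n (j + 1) j <;> decide
  rw [chainedSat, hstep, card_erase_of_mem (mem_univ _)]
  simp only [bne_self_eq_false, chainedF_self, filter_true, card_univ, Fintype.card_fin,
    Nat.add_one_sub_one]
  omega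

lemma chainedSat_div_le (α β : Fin (n + 2) → Bool) :
    (chainedSat n α β : ℝ) / (2 * (n + 2)) ≤ 1 - 1 / (2 * (n + 2)) := by
  have h : (chainedSat n α β : ℝ) + 1 ≤ 2 * (n + 2) := by exact_mod_cast chainedSat_lt α β
  rw [one_sub_div (by positivity)]
  gcongr
  linarith

lemma chainedSat_false_div :
    (chainedSat n (fun _ => false) (fun _ => false) : ℝ) / (2 * (n + 2)) =
      1 - 1 / (2 * (n + 2)) := by
  have h : (chainedSat n (fun _ => false) (fun _ => false) : ℝ) + 1 = 2 * (n + 2) := by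
    exact_mod_cast chainedSat_false_add_one
  rw [one_sub_div (by positivity), ← h, add_sub_cancel_right]

end

/-- For the chained Bell game with `N = n+2 ≥ 2` settings, no
deterministic local strategy satisfies all `2N` constraints: if all equality
constraints hold, then `α₀ ⊕ β_{N−1} = 0`, contradicting the required
`α₀ ⊕ β_{N−1} = 1`.  At most `2N − 1` constraints hold, the all-zeros
strategy achieves this, and the classical value is `ω_L = 1 − 1/(2N)`. -/
theorem stmt11 (n : ℕ) :
    (∀ α β : Fin (n + 2) → Bool,
      (∀ j, α j = β j) →
      (∀ j : Fin (n + 2), j ≠ Fin.last (n + 1) → α (j + 1) = β j) →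
      xor (α 0) (β (Fin.last (n + 1))) = false) ∧
    (∀ α β : Fin (n + 2) → Bool, chainedSat n α β ≤ 2 * (n + 2) - 1) ∧
    IsGreatest
      {w : ℝ | ∃ α β : Fin (n + 2) → Bool,
        w = (chainedSat n α β : ℝ) / (2 * (n + 2))}
      (1 - 1 / (2 * (n + 2))) := by
  refine ⟨xor_zero_last_eq_false, fun α β => Nat.le_sub_one_of_lt (chainedSat_lt α β),
    ⟨_, _, chainedSat_false_div.symm⟩, ?_⟩
  rintro w ⟨α, β, rfl⟩
  exact chainedSat_div_le α β
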